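/- arXiv:1312.0098 — 2 statements merged into one kernel-verified Lean document; each statement's English description precedes it below -/
import Mathlib

section
/- Let G and H be connected graphs, each with at least 2 vertices. Then the 3-Steiner diameter of the Cartesian product satisfies sdiam_3(G □ H) = sdiam_3(G) + sdiam_3(H). -/
open SimpleGraph

/-- An edge coloring `c` of `G` is a 3-rainbow coloring if every set of at most three
vertices is contained in a rainbow tree of `G`, formalized as a connected subgraph of `G`
on whose edge set the coloring `c` is injective. -/
def IsRainbowColoring3 {V : Type*} (G : SimpleGraph V) (c : Sym2 V → ℕ) : Prop :=
  ∀ S : Set V, S.ncard ≤ 3 →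
    ∃ T : G.Subgraph, T.Connected ∧ S ⊆ T.verts ∧ Set.InjOn c T.edgeSet

/-- The 3-rainbow index `rx₃(G)`: the minimum number of colors in a 3-rainbow coloring. -/
noncomputable def rx3 {V : Type*} (G : SimpleGraph V) : ℕ :=
  sInf {n | ∃ c : Sym2 V → ℕ, (∀ e ∈ G.edgeSet, c e < n) ∧ IsRainbowColoring3 G c}

/-- The Steiner distance of a vertex set `S` of `G`: the minimum number of edges of a
tree (connected subgraph) of `G` containing `S`. -/
noncomputable def steinerDist {V : Type*} (G : SimpleGraph V) (S : Set V) : ℕ :=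
  sInf {n | ∃ T : G.Subgraph, T.Connected ∧ S ⊆ T.verts ∧ T.edgeSet.ncard = n}

/-- The 3-Steiner diameter of `G`: the maximum Steiner distance over vertex sets of
at most 3 vertices. -/
noncomputable def sdiam3 {V : Type*} (G : SimpleGraph V) : ℕ :=
  sSup {n | ∃ S : Set V, S.ncard ≤ 3 ∧ steinerDist G S = n}

/-- The rainbow connection number `rc(G)`: the minimum number of colors in an edge coloring
of `G` such that every two vertices are joined by a path whose edges all receive
distinct colors. -/
noncomputable def rcIndex {V : Type*} (G : SimpleGraph V) : ℕ :=
  sInf {n | ∃ c : Sym2 V → ℕ, (∀ e ∈ G.edgeSet, c e < n) ∧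
    ∀ u v : V, ∃ p : G.Walk u v, p.IsPath ∧ (p.edges.map c).Nodup}

section Basic
variable {V : Type*} {G : SimpleGraph V}

lemma steinerDist_le {S : Set V} {T : G.Subgraph}
    (hc : T.Connected) (hs : S ⊆ T.verts) : steinerDist G S ≤ T.edgeSet.ncard :=
  Nat.sInf_le ⟨T, hc, hs, rfl⟩

lemma top_subgraph_connected (hG : G.Connected) : (⊤ : G.Subgraph).Connected := by
  rw [Subgraph.connected_iff']
  exact (Subgraph.topIso (G := G)).connected_iff.mpr hG

lemma steinerDist_exists (hG : G.Connected) (S : Set V) :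
    ∃ T : G.Subgraph, T.Connected ∧ S ⊆ T.verts ∧ T.edgeSet.ncard = steinerDist G S := by
  have hne : {n | ∃ T : G.Subgraph, T.Connected ∧ S ⊆ T.verts ∧ T.edgeSet.ncard = n}.Nonempty :=
    ⟨_, ⟨⊤, top_subgraph_connected hG, by simp, rfl⟩⟩
  obtain ⟨T, hc, hs, he⟩ := Nat.sInf_mem hne
  exact ⟨T, hc, hs, he⟩

lemma steinerDist_mono (hG : G.Connected) {S S' : Set V} (h : S ⊆ S') :
    steinerDist G S ≤ steinerDist G S' := by
  obtain ⟨T, hc, hs, he⟩ := steinerDist_exists hG S'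
  exact he ▸ steinerDist_le hc (h.trans hs)

lemma sdiam3_bddAbove (hG : G.Connected) :
    BddAbove {n | ∃ S : Set V, S.ncard ≤ 3 ∧ steinerDist G S = n} := by
  refine ⟨G.edgeSet.ncard, ?_⟩
  rintro n ⟨S, -, rfl⟩
  have : S ⊆ (⊤ : G.Subgraph).verts := by simp
  simpa using steinerDist_le (top_subgraph_connected hG) this

lemma le_sdiam3 (hG : G.Connected) {S : Set V} (h : S.ncard ≤ 3) :
    steinerDist G S ≤ sdiam3 G :=
  le_csSup (sdiam3_bddAbove hG) ⟨S, h, rfl⟩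

end Basic

section Triples
variable {V : Type*}

lemma eq_triple_of_ncard_le_three {S : Set V} (hfin : S.Finite) (hne : S.Nonempty)
    (h : S.ncard ≤ 3) : ∃ a b c : V, S = {a, b, c} := by
  have h1 : 0 < S.ncard := (Set.ncard_pos hfin).mpr hne
  interval_cases hn : S.ncard
  · obtain ⟨a, rfl⟩ := Set.ncard_eq_one.mp hn
    exact ⟨a, a, a, by simp⟩
  · obtain ⟨a, b, -, rfl⟩ := Set.ncard_eq_two.mp hn
    exact ⟨a, a, b, by simp⟩
  · obtain ⟨a, b, c, -, -, -, rfl⟩ := Set.ncard_eq_three.mp hn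
    exact ⟨a, b, c, rfl⟩

lemma exists_triple_superset [Nonempty V] {S : Set V} (hfin : S.Finite) (h : S.ncard ≤ 3) :
    ∃ a b c : V, S ⊆ {a, b, c} := by
  rcases S.eq_empty_or_nonempty with rfl | hne
  · exact ⟨Classical.arbitrary V, Classical.arbitrary V, Classical.arbitrary V, by simp⟩
  · obtain ⟨a, b, c, rfl⟩ := eq_triple_of_ncard_le_three hfin hne h
    exact ⟨a, b, c, le_refl _⟩

lemma ncard_triple_le (a b c : V) : ({a, b, c} : Set V).ncard ≤ 3 := by
  refine le_trans (Set.ncard_insert_le _ _) ?_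
  have := Set.ncard_insert_le b ({c} : Set V)
  simp only [Set.ncard_singleton] at this ⊢
  omega

end Triples

section Median
variable {V : Type*} {G : SimpleGraph V}

lemma subgraph_dist_le {T : G.Subgraph} {u v : T.verts}
    (h : T.coe.Reachable u v) : G.dist ↑u ↑v ≤ T.coe.dist u v := by
  obtain ⟨p, hp, hlen⟩ := h.exists_path_of_dist
  calc G.dist ↑u ↑v ≤ (p.map T.hom).length := SimpleGraph.dist_le _
    _ = p.length := Walk.length_map _ _
    _ = T.coe.dist u v := hlen

lemma exists_center {T : G.Subgraph} (hT : T.Connected) (hfin : T.edgeSet.Finite)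
    {y₁ y₂ y₃ : V} (h1 : y₁ ∈ T.verts) (h2 : y₂ ∈ T.verts) (h3 : y₃ ∈ T.verts) :
    ∃ c : V, G.dist c y₁ + G.dist c y₂ + G.dist c y₃ ≤ T.edgeSet.ncard := by
  classical
  have hconn : T.coe.Connected := hT.coe
  set Γ := T.coe with hΓ
  set u₁ : T.verts := ⟨y₁, h1⟩
  set u₂ : T.verts := ⟨y₂, h2⟩
  set u₃ : T.verts := ⟨y₃, h3⟩
  obtain ⟨p, hp, hplen⟩ := (hconn u₁ u₂).exists_path_of_dist
  have hsupne : p.support.toFinset.Nonempty := ⟨u₁, by simp⟩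
  obtain ⟨c, hcmem, hcmin⟩ := p.support.toFinset.exists_min_image (fun v => Γ.dist u₃ v) hsupne
  rw [List.mem_toFinset] at hcmem
  obtain ⟨r, hr, hrlen⟩ := (hconn u₃ c).exists_path_of_dist
  -- any vertex of r which lies on p must be c
  have key : ∀ v (hvr : v ∈ r.support), v ∈ p.support → v = c := by
    intro v hvr hvp
    have hle : Γ.dist u₃ v ≤ (r.takeUntil v hvr).length := SimpleGraph.dist_le _
    have hge : Γ.dist u₃ c ≤ Γ.dist u₃ v := hcmin v (by simpa using hvp)
    have hsum : (r.takeUntil v hvr).length + (r.dropUntil v hvr).length = r.length := by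
      conv_rhs => rw [← r.take_spec hvr]
      rw [Walk.length_append]
    have h0 : (r.dropUntil v hvr).length = 0 := by omega
    exact (Walk.eq_of_length_eq_zero h0)
  have hdisj : ∀ e ∈ p.edges, e ∉ r.edges := by
    intro e hep her
    induction e using Sym2.ind with
    | _ a b =>
      have ha := key a (Walk.fst_mem_support_of_mem_edges r her)
        (Walk.fst_mem_support_of_mem_edges p hep)
      have hb := key b (Walk.snd_mem_support_of_mem_edges r her)
        (Walk.snd_mem_support_of_mem_edges p hep)
      subst ha; subst hb
      exact Γ.irrefl (Γ.mem_edgeSet.mp (p.edges_subset_edgeSet hep))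
  -- edge counting
  have hnodup_p : p.edges.Nodup := hp.edges_nodup
  have hnodup_r : r.edges.Nodup := hr.edges_nodup
  set F : Finset (Sym2 T.verts) := p.edges.toFinset ∪ r.edges.toFinset with hF
  have hcard : F.card = p.length + r.length := by
    rw [hF, Finset.card_union_of_disjoint, List.toFinset_card_of_nodup hnodup_p,
      List.toFinset_card_of_nodup hnodup_r, Walk.length_edges, Walk.length_edges]
    rw [Finset.disjoint_left]
    intro e he he'
    exact hdisj e (List.mem_toFinset.mp he) (List.mem_toFinset.mp he')
  have hFbound : F.card ≤ T.edgeSet.ncard := by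
    have hinj : Function.Injective (Sym2.map (Subtype.val : T.verts → V)) :=
      Sym2.map.injective Subtype.val_injective
    have himg : ((F.image (Sym2.map Subtype.val)) : Set (Sym2 V)) ⊆ T.edgeSet := by
      intro e he
      simp only [Finset.coe_image, Set.mem_image, Finset.mem_coe] at he
      obtain ⟨e', he', rfl⟩ := he
      have : e' ∈ Γ.edgeSet := by
        rw [hF] at he'
        rcases Finset.mem_union.mp he' with h | h
        · exact p.edges_subset_edgeSet (List.mem_toFinset.mp h)
        · exact r.edges_subset_edgeSet (List.mem_toFinset.mp h)
      induction e' using Sym2.ind with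
      | _ a b =>
        rw [Sym2.map_pair_eq]
        exact Γ.mem_edgeSet.mp this
    calc F.card = (F.image (Sym2.map Subtype.val)).card :=
          (Finset.card_image_of_injective F hinj).symm
      _ = ((F.image (Sym2.map Subtype.val)) : Set (Sym2 V)).ncard := by
          rw [Set.ncard_coe_finset]
      _ ≤ T.edgeSet.ncard := Set.ncard_le_ncard himg hfin
  -- distance bounds
  have d12 : Γ.dist u₁ c + Γ.dist c u₂ ≤ p.length := by
    have h1' : Γ.dist u₁ c ≤ (p.takeUntil c hcmem).length := SimpleGraph.dist_le _
    have h2' : Γ.dist c u₂ ≤ (p.dropUntil c hcmem).length := SimpleGraph.dist_le _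
    have hsum : (p.takeUntil c hcmem).length + (p.dropUntil c hcmem).length = p.length := by
      conv_rhs => rw [← p.take_spec hcmem]
      rw [Walk.length_append]
    omega
  have d3 : Γ.dist u₃ c = r.length := hrlen.symm
  have e1 : G.dist ↑c y₁ ≤ Γ.dist c u₁ := subgraph_dist_le (hconn c u₁)
  have e2 : G.dist ↑c y₂ ≤ Γ.dist c u₂ := subgraph_dist_le (hconn c u₂)
  have e3 : G.dist ↑c y₃ ≤ Γ.dist c u₃ := subgraph_dist_le (hconn c u₃)
  refine ⟨↑c, ?_⟩
  have hc1 : Γ.dist c u₁ = Γ.dist u₁ c := Γ.dist_comm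
  have hc3 : Γ.dist c u₃ = Γ.dist u₃ c := Γ.dist_comm
  omega
end Median

section Upper
variable {α β : Type*} {G : SimpleGraph α} {H : SimpleGraph β}

lemma list_setOf_mem_ncard_le {γ : Type*} (l : List γ) : {e | e ∈ l}.ncard ≤ l.length := by
  classical
  rw [show {e | e ∈ l} = ↑l.toFinset by ext; simp, Set.ncard_coe_finset]
  exact l.toFinset_card_le

lemma steinerDist_triple_boxProd_le [Fintype α] [Fintype β]
    (hG : G.Connected) (hH : H.Connected) (x₁ x₂ x₃ : α) (y₁ y₂ y₃ : β) :
    steinerDist (G □ H) {(x₁, y₁), (x₂, y₂), (x₃, y₃)} ≤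
      steinerDist G {x₁, x₂, x₃} + steinerDist H {y₁, y₂, y₃} := by
  classical
  obtain ⟨TG, hTGc, hTGs, hTGe⟩ := steinerDist_exists hG {x₁, x₂, x₃}
  obtain ⟨TH, hTHc, hTHs, hTHe⟩ := steinerDist_exists hH {y₁, y₂, y₃}
  obtain ⟨c, hc⟩ := exists_center hTGc (Set.toFinite _)
    (hTGs (show x₁ ∈ ({x₁, x₂, x₃} : Set α) by simp))
    (hTGs (show x₂ ∈ ({x₁, x₂, x₃} : Set α) by simp))
    (hTGs (show x₃ ∈ ({x₁, x₂, x₃} : Set α) by simp))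
  obtain ⟨c', hc'⟩ := exists_center hTHc (Set.toFinite _)
    (hTHs (show y₁ ∈ ({y₁, y₂, y₃} : Set β) by simp))
    (hTHs (show y₂ ∈ ({y₁, y₂, y₃} : Set β) by simp))
    (hTHs (show y₃ ∈ ({y₁, y₂, y₃} : Set β) by simp))
  obtain ⟨P₁, hP₁⟩ := hG.exists_walk_length_eq_dist c x₁
  obtain ⟨P₂, hP₂⟩ := hG.exists_walk_length_eq_dist c x₂
  obtain ⟨P₃, hP₃⟩ := hG.exists_walk_length_eq_dist c x₃
  obtain ⟨Q₁, hQ₁⟩ := hH.exists_walk_length_eq_dist c' y₁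
  obtain ⟨Q₂, hQ₂⟩ := hH.exists_walk_length_eq_dist c' y₂
  obtain ⟨Q₃, hQ₃⟩ := hH.exists_walk_length_eq_dist c' y₃
  set W₁ : (G □ H).Walk (c, c') (x₁, y₁) := (Q₁.boxProdRight G c).append (P₁.boxProdLeft H y₁) with hW₁
  set W₂ : (G □ H).Walk (c, c') (x₂, y₂) := (Q₂.boxProdRight G c).append (P₂.boxProdLeft H y₂) with hW₂
  set W₃ : (G □ H).Walk (c, c') (x₃, y₃) := (Q₃.boxProdRight G c).append (P₃.boxProdLeft H y₃) with hW₃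
  set T : (G □ H).Subgraph := W₁.toSubgraph ⊔ W₂.toSubgraph ⊔ W₃.toSubgraph with hT
  have hmem : ∀ (u v : α × β) (W : (G □ H).Walk u v), u ∈ W.toSubgraph.verts :=
    fun u v W => W.start_mem_verts_toSubgraph
  have hTc : T.Connected := by
    refine Subgraph.connected_sup (Subgraph.connected_sup W₁.toSubgraph_connected.preconnected
      W₂.toSubgraph_connected.preconnected ⟨(c, c'), ?_, ?_⟩).preconnected W₃.toSubgraph_connected.preconnected ⟨(c, c'), ?_, ?_⟩
    · exact W₁.start_mem_verts_toSubgraph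
    · exact W₂.start_mem_verts_toSubgraph
    · exact Or.inl W₁.start_mem_verts_toSubgraph
    · exact W₃.start_mem_verts_toSubgraph
  have hTs : {(x₁, y₁), (x₂, y₂), (x₃, y₃)} ⊆ T.verts := by
    intro z hz
    simp only [Set.mem_insert_iff, Set.mem_singleton_iff] at hz
    rcases hz with rfl | rfl | rfl
    · exact Or.inl (Or.inl W₁.end_mem_verts_toSubgraph)
    · exact Or.inl (Or.inr W₂.end_mem_verts_toSubgraph)
    · exact Or.inr W₃.end_mem_verts_toSubgraph
  have hWlen : ∀ {u v : α × β} (W : (G □ H).Walk u v), W.toSubgraph.edgeSet.ncard ≤ W.length := by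
    intro u v W
    rw [W.edgeSet_toSubgraph]
    exact le_trans (list_setOf_mem_ncard_le W.edges) (by rw [W.length_edges])
  have hTe : T.edgeSet.ncard ≤ W₁.length + W₂.length + W₃.length := by
    have h12 : (W₁.toSubgraph ⊔ W₂.toSubgraph).edgeSet = W₁.toSubgraph.edgeSet ∪
        W₂.toSubgraph.edgeSet := Subgraph.edgeSet_sup
    have hTE : T.edgeSet = (W₁.toSubgraph.edgeSet ∪ W₂.toSubgraph.edgeSet) ∪
        W₃.toSubgraph.edgeSet := by rw [hT, Subgraph.edgeSet_sup, h12]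
    rw [hTE]
    calc ((W₁.toSubgraph.edgeSet ∪ W₂.toSubgraph.edgeSet) ∪ W₃.toSubgraph.edgeSet).ncard
        ≤ (W₁.toSubgraph.edgeSet ∪ W₂.toSubgraph.edgeSet).ncard + W₃.toSubgraph.edgeSet.ncard :=
          Set.ncard_union_le _ _
      _ ≤ W₁.toSubgraph.edgeSet.ncard + W₂.toSubgraph.edgeSet.ncard +
          W₃.toSubgraph.edgeSet.ncard := by
          have := Set.ncard_union_le W₁.toSubgraph.edgeSet W₂.toSubgraph.edgeSet
          omega
      _ ≤ W₁.length + W₂.length + W₃.length := by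
          have := hWlen W₁; have := hWlen W₂; have := hWlen W₃; omega
  have hlen : ∀ {x : α} {y : β} (P : G.Walk c x) (Q : H.Walk c' y),
      ((Q.boxProdRight G c).append (P.boxProdLeft H y) : (G □ H).Walk (c, c') (x, y)).length
        = Q.length + P.length := by
    intro x y P Q
    rw [Walk.length_append, Walk.boxProdLeft, Walk.boxProdRight]
    exact congrArg₂ (· + ·) (Walk.length_map _ Q) (Walk.length_map _ P)
  have hW₁l : W₁.length = Q₁.length + P₁.length := hlen P₁ Q₁
  have hW₂l : W₂.length = Q₂.length + P₂.length := hlen P₂ Q₂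
  have hW₃l : W₃.length = Q₃.length + P₃.length := hlen P₃ Q₃
  have hfinal := steinerDist_le hTc hTs
  rw [hP₁, hQ₁] at hW₁l
  rw [hP₂, hQ₂] at hW₂l
  rw [hP₃, hQ₃] at hW₃l
  omega
end Upper

section Proj
variable {α β : Type*} (G : SimpleGraph α) (H : SimpleGraph β)

/-- Projection of a subgraph of a box product to the first factor. -/
def projLeft (T : (G □ H).Subgraph) : G.Subgraph where
  verts := Prod.fst '' T.verts
  Adj a a' := ∃ b, T.Adj (a, b) (a', b)
  adj_sub := by
    rintro a a' ⟨b, hb⟩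
    rcases boxProd_adj.mp (T.adj_sub hb) with ⟨h, -⟩ | ⟨h, -⟩
    · exact h
    · exact absurd h H.irrefl
  edge_vert := by
    rintro a a' ⟨b, hb⟩
    exact ⟨(a, b), T.edge_vert hb, rfl⟩
  symm := by
    constructor
    rintro a a' ⟨b, hb⟩
    exact ⟨b, hb.symm⟩

/-- Projection of a subgraph of a box product to the second factor. -/
def projRight (T : (G □ H).Subgraph) : H.Subgraph where
  verts := Prod.snd '' T.verts
  Adj b b' := ∃ a, T.Adj (a, b) (a, b')
  adj_sub := by
    rintro b b' ⟨a, ha⟩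
    rcases boxProd_adj.mp (T.adj_sub ha) with ⟨h, -⟩ | ⟨h, -⟩
    · exact absurd h G.irrefl
    · exact h
  edge_vert := by
    rintro b b' ⟨a, ha⟩
    exact ⟨(a, b), T.edge_vert ha, rfl⟩
  symm := by
    constructor
    rintro b b' ⟨a, ha⟩
    exact ⟨a, ha.symm⟩

variable {G H}

lemma projLeft_connected {T : (G □ H).Subgraph} (hT : T.Connected) :
    (projLeft G H T).Connected := by
  rw [Subgraph.connected_iff]
  refine ⟨⟨?_⟩, hT.nonempty.image _⟩
  have main : ∀ (u v : T.verts), T.coe.Walk u v →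
      (projLeft G H T).coe.Reachable ⟨u.1.1, ⟨u.1, u.2, rfl⟩⟩ ⟨v.1.1, ⟨v.1, v.2, rfl⟩⟩ := by
    intro u v w
    induction w with
    | nil => exact Reachable.refl _
    | @cons u m v h q ih =>
      have hadj : T.Adj u.1 m.1 := h
      rcases boxProd_adj.mp (T.adj_sub hadj) with ⟨-, hsnd⟩ | ⟨-, hfst⟩
      · -- G-type edge
        have hAdj : (projLeft G H T).Adj u.1.1 m.1.1 := by
          refine ⟨u.1.2, ?_⟩
          have h1 : ((u.1.1 : α), u.1.2) = u.1 := rfl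
          have h2 : ((m.1.1 : α), u.1.2) = m.1 := by
            rw [hsnd]
          rw [h1, h2]
          exact hadj
        have : (projLeft G H T).coe.Adj ⟨u.1.1, ⟨u.1, u.2, rfl⟩⟩ ⟨m.1.1, ⟨m.1, m.2, rfl⟩⟩ :=
          hAdj
        exact this.reachable.trans ih
      · -- H-type edge: first coordinates agree
        have : (⟨u.1.1, ⟨u.1, u.2, rfl⟩⟩ : (projLeft G H T).verts) = ⟨m.1.1, ⟨m.1, m.2, rfl⟩⟩ :=
          Subtype.ext hfst
        rw [this]
        exact ih
  rintro ⟨a, ⟨p, hp, rfl⟩⟩ ⟨a', ⟨p', hp', rfl⟩⟩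
  obtain ⟨w⟩ := hT.coe ⟨p, hp⟩ ⟨p', hp'⟩
  exact main _ _ w
end Proj

section Proj2
variable {α β : Type*} {G : SimpleGraph α} {H : SimpleGraph β}

lemma projRight_connected {T : (G □ H).Subgraph} (hT : T.Connected) :
    (projRight G H T).Connected := by
  rw [Subgraph.connected_iff]
  refine ⟨⟨?_⟩, hT.nonempty.image _⟩
  have main : ∀ (u v : T.verts), T.coe.Walk u v →
      (projRight G H T).coe.Reachable ⟨u.1.2, ⟨u.1, u.2, rfl⟩⟩ ⟨v.1.2, ⟨v.1, v.2, rfl⟩⟩ := by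
    intro u v w
    induction w with
    | nil => exact Reachable.refl _
    | @cons u m v h q ih =>
      have hadj : T.Adj u.1 m.1 := h
      rcases boxProd_adj.mp (T.adj_sub hadj) with ⟨-, hsnd⟩ | ⟨-, hfst⟩
      · have : (⟨u.1.2, ⟨u.1, u.2, rfl⟩⟩ : (projRight G H T).verts) = ⟨m.1.2, ⟨m.1, m.2, rfl⟩⟩ :=
          Subtype.ext hsnd
        rw [this]
        exact ih
      · have hAdj : (projRight G H T).Adj u.1.2 m.1.2 := by
          refine ⟨u.1.1, ?_⟩
          have h1 : ((u.1.1 : α), u.1.2) = u.1 := rfl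
          have h2 : ((u.1.1 : α), m.1.2) = m.1 := by
            rw [hfst]
          rw [h1, h2]
          exact hadj
        have : (projRight G H T).coe.Adj ⟨u.1.2, ⟨u.1, u.2, rfl⟩⟩ ⟨m.1.2, ⟨m.1, m.2, rfl⟩⟩ :=
          hAdj
        exact this.reachable.trans ih
  rintro ⟨a, ⟨p, hp, rfl⟩⟩ ⟨a', ⟨p', hp', rfl⟩⟩
  obtain ⟨w⟩ := hT.coe ⟨p, hp⟩ ⟨p', hp'⟩
  exact main _ _ w

lemma proj_edge_bound [Fintype α] [Fintype β] (T : (G □ H).Subgraph) :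
    (projLeft G H T).edgeSet.ncard + (projRight G H T).edgeSet.ncard ≤ T.edgeSet.ncard := by
  classical
  set Eg : Set (Sym2 (α × β)) := {e ∈ T.edgeSet | (Sym2.map Prod.snd e).IsDiag} with hEg
  set Eh : Set (Sym2 (α × β)) := {e ∈ T.edgeSet | (Sym2.map Prod.fst e).IsDiag} with hEh
  have hsub : Eg ∪ Eh ⊆ T.edgeSet := by
    rintro e (he | he) <;> exact he.1
  have hdisj : Disjoint Eg Eh := by
    rw [Set.disjoint_left]
    rintro e ⟨he, hsnd⟩ ⟨-, hfst⟩
    induction e using Sym2.ind with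
    | _ u v =>
      rw [Sym2.map_pair_eq, Sym2.mk_isDiag_iff] at hsnd hfst
      have huv : u = v := Prod.ext hfst hsnd
      have := T.adj_sub (Subgraph.mem_edgeSet.mp he)
      rw [huv] at this
      exact (G □ H).irrefl this
  have hcover : T.edgeSet ⊆ Eg ∪ Eh := by
    intro e he
    induction e using Sym2.ind with
    | _ u v =>
      rcases boxProd_adj.mp (T.adj_sub (Subgraph.mem_edgeSet.mp he)) with ⟨-, h⟩ | ⟨-, h⟩
      · exact Or.inl ⟨he, by rw [Sym2.map_pair_eq, Sym2.mk_isDiag_iff]; exact h⟩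
      · exact Or.inr ⟨he, by rw [Sym2.map_pair_eq, Sym2.mk_isDiag_iff]; exact h⟩
  have hunion : T.edgeSet = Eg ∪ Eh := le_antisymm hcover hsub
  have hcard : T.edgeSet.ncard = Eg.ncard + Eh.ncard := by
    rw [hunion]
    exact Set.ncard_union_eq hdisj
  have hL : (projLeft G H T).edgeSet ⊆ Sym2.map Prod.fst '' Eg := by
    intro e he
    induction e using Sym2.ind with
    | _ a a' =>
      obtain ⟨b, hb⟩ := Subgraph.mem_edgeSet.mp he
      refine ⟨s((a, b), (a', b)), ⟨Subgraph.mem_edgeSet.mpr hb, ?_⟩, ?_⟩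
      · rw [Sym2.map_pair_eq, Sym2.mk_isDiag_iff]
      · rw [Sym2.map_pair_eq]
  have hR : (projRight G H T).edgeSet ⊆ Sym2.map Prod.snd '' Eh := by
    intro e he
    induction e using Sym2.ind with
    | _ b b' =>
      obtain ⟨a, ha⟩ := Subgraph.mem_edgeSet.mp he
      refine ⟨s((a, b), (a, b')), ⟨Subgraph.mem_edgeSet.mpr ha, ?_⟩, ?_⟩
      · rw [Sym2.map_pair_eq, Sym2.mk_isDiag_iff]
      · rw [Sym2.map_pair_eq]
  have h1 : (projLeft G H T).edgeSet.ncard ≤ Eg.ncard :=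
    le_trans (Set.ncard_le_ncard hL (Set.toFinite _)) (Set.ncard_image_le (Set.toFinite _))
  have h2 : (projRight G H T).edgeSet.ncard ≤ Eh.ncard :=
    le_trans (Set.ncard_le_ncard hR (Set.toFinite _)) (Set.ncard_image_le (Set.toFinite _))
  omega

lemma steinerDist_boxProd_ge [Fintype α] [Fintype β]
    (hG : G.Connected) (hH : H.Connected) (S : Set (α × β)) :
    steinerDist G (Prod.fst '' S) + steinerDist H (Prod.snd '' S) ≤
      steinerDist (G □ H) S := by
  obtain ⟨T, hc, hs, he⟩ := steinerDist_exists (hG.boxProd hH) S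
  have h1 : steinerDist G (Prod.fst '' S) ≤ (projLeft G H T).edgeSet.ncard :=
    steinerDist_le (projLeft_connected hc) (Set.image_mono hs)
  have h2 : steinerDist H (Prod.snd '' S) ≤ (projRight G H T).edgeSet.ncard :=
    steinerDist_le (projRight_connected hc) (Set.image_mono hs)
  have h3 := proj_edge_bound T
  omega
end Proj2

section Final
variable {V : Type*} {G : SimpleGraph V}

lemma steinerDist_singleton (a : V) : steinerDist G {a} = 0 :=
  Nat.le_zero.mp (Nat.sInf_le ⟨G.singletonSubgraph a, Subgraph.singletonSubgraph_connected,
    by simp [SimpleGraph.singletonSubgraph], by simp [SimpleGraph.edgeSet_singletonSubgraph]⟩)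

lemma sdiam3_exists_triple [Fintype V] [Nonempty V] (hG : G.Connected) :
    ∃ a b c : V, steinerDist G {a, b, c} = sdiam3 G := by
  have hne : {n | ∃ S : Set V, S.ncard ≤ 3 ∧ steinerDist G S = n}.Nonempty :=
    ⟨steinerDist G {Classical.arbitrary V}, {Classical.arbitrary V}, by simp, rfl⟩
  obtain ⟨S, hS, hval⟩ := Nat.sSup_mem hne (sdiam3_bddAbove hG)
  have hval : steinerDist G S = sdiam3 G := hval
  rcases S.eq_empty_or_nonempty with rfl | hne'
  ·
    have a := Classical.arbitrary V
    refine ⟨a, a, a, le_antisymm ?_ ?_⟩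
    · rw [show ({a, a, a} : Set V) = {a} by simp, steinerDist_singleton]
      exact Nat.zero_le _
    · have hval' : steinerDist G ∅ = sdiam3 G := hval
      rw [← hval']
      exact steinerDist_mono hG (Set.empty_subset _)
  · obtain ⟨a, b, c, rfl⟩ := eq_triple_of_ncard_le_three (Set.toFinite _) hne' hS
    exact ⟨a, b, c, hval⟩

lemma sdiam3_set_nonempty [Nonempty V] :
    {n | ∃ S : Set V, S.ncard ≤ 3 ∧ steinerDist G S = n}.Nonempty :=
  ⟨steinerDist G {Classical.arbitrary V}, {Classical.arbitrary V}, by simp, rfl⟩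

end Final


/-- For connected graphs `G` and `H`, each with at least 2 vertices, the 3-Steiner
diameter of the Cartesian product satisfies `sdiam₃(G □ H) = sdiam₃(G) + sdiam₃(H)`. -/
theorem sdiam3_boxProd {α β : Type*} [Fintype α] [Fintype β]
    (G : SimpleGraph α) (H : SimpleGraph β) (hG : G.Connected) (hH : H.Connected)
    (hα : 2 ≤ Fintype.card α) (hβ : 2 ≤ Fintype.card β) :
    sdiam3 (G □ H) = sdiam3 G + sdiam3 H := by
  have : Nonempty α := hG.nonempty
  have : Nonempty β := hH.nonempty
  have hGH : (G □ H).Connected := hG.boxProd hH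
  refine le_antisymm ?_ ?_
  · -- upper bound
    refine csSup_le sdiam3_set_nonempty ?_
    rintro n ⟨S, hS3, rfl⟩
    obtain ⟨p₁, p₂, p₃, hsub⟩ := exists_triple_superset (Set.toFinite S) hS3
    have h1 : steinerDist (G □ H) S ≤ steinerDist (G □ H) {p₁, p₂, p₃} :=
      steinerDist_mono hGH hsub
    have h2 : steinerDist (G □ H) {(p₁.1, p₁.2), (p₂.1, p₂.2), (p₃.1, p₃.2)} ≤
        steinerDist G {p₁.1, p₂.1, p₃.1} + steinerDist H {p₁.2, p₂.2, p₃.2} :=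
      steinerDist_triple_boxProd_le hG hH p₁.1 p₂.1 p₃.1 p₁.2 p₂.2 p₃.2
    simp only [Prod.mk.eta] at h2
    have h3 : steinerDist G {p₁.1, p₂.1, p₃.1} ≤ sdiam3 G :=
      le_sdiam3 hG (ncard_triple_le _ _ _)
    have h4 : steinerDist H {p₁.2, p₂.2, p₃.2} ≤ sdiam3 H :=
      le_sdiam3 hH (ncard_triple_le _ _ _)
    omega
  · -- lower bound
    obtain ⟨x₁, x₂, x₃, hx⟩ := sdiam3_exists_triple hG
    obtain ⟨y₁, y₂, y₃, hy⟩ := sdiam3_exists_triple hH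
    set S : Set (α × β) := {(x₁, y₁), (x₂, y₂), (x₃, y₃)} with hSdef
    have hfst : Prod.fst '' S = {x₁, x₂, x₃} := by
      rw [hSdef]
      simp [Set.image_insert_eq]
    have hsnd : Prod.snd '' S = {y₁, y₂, y₃} := by
      rw [hSdef]
      simp [Set.image_insert_eq]
    have hkey := steinerDist_boxProd_ge hG hH S
    rw [hfst, hsnd, hx, hy] at hkey
    have hfin : steinerDist (G □ H) S ≤ sdiam3 (G □ H) :=
      le_sdiam3 hGH (ncard_triple_le _ _ _)
    omega
end

section
/- Let k ≥ 2 and let G_1, G_2, ..., G_k be connected graphs, each with at least 2 vertices, and let G* = G_1 □ G_2 □ ... □ G_k be their iterated Cartesian product. Then rx_3(G*) ≤ Σ_{i=1}^{k} rx_3(G_i). -/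
open SimpleGraph

/-- The lexicographic product `G[H]` of simple graphs. -/
def lexProd {α β : Type*} (G : SimpleGraph α) (H : SimpleGraph β) :
    SimpleGraph (α × β) where
  Adj x y := G.Adj x.1 y.1 ∨ (x.1 = y.1 ∧ H.Adj x.2 y.2)
  symm := by
    constructor
    rintro x y (h | ⟨h1, h2⟩)
    · exact Or.inl h.symm
    · exact Or.inr ⟨h1.symm, h2.symm⟩
  loopless := by
    constructor
    rintro x (h | ⟨-, h⟩)
    · exact G.irrefl h
    · exact H.irrefl h

/-- The strong product `G ⊠ H` of simple graphs. -/
def strongProd {α β : Type*} (G : SimpleGraph α) (H : SimpleGraph β) :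
    SimpleGraph (α × β) where
  Adj x y := x ≠ y ∧ (x.1 = y.1 ∨ G.Adj x.1 y.1) ∧ (x.2 = y.2 ∨ H.Adj x.2 y.2)
  symm := by
    constructor
    rintro x y ⟨hne, h1, h2⟩
    exact ⟨hne.symm, h1.imp Eq.symm (fun h => h.symm), h2.imp Eq.symm (fun h => h.symm)⟩
  loopless := ⟨fun x h => h.1 rfl⟩

/-- The join `G ∨ H` of two simple graphs: the disjoint union of `G` and `H` together
with all edges joining a vertex of `G` to a vertex of `H`. -/
def joinGraph {α β : Type*} (G : SimpleGraph α) (H : SimpleGraph β) :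
    SimpleGraph (α ⊕ β) where
  Adj x y :=
    match x, y with
    | Sum.inl a, Sum.inl b => G.Adj a b
    | Sum.inr a, Sum.inr b => H.Adj a b
    | Sum.inl _, Sum.inr _ => True
    | Sum.inr _, Sum.inl _ => True
  symm := by
    constructor
    rintro (a | a) (b | b) h
    · exact h.symm
    · trivial
    · trivial
    · exact h.symm
  loopless := by
    constructor
    rintro (a | a) h
    · exact G.irrefl h
    · exact H.irrefl h

/-- The Cartesian product `G₁ □ G₂ □ ⋯ □ G_k` of a family of simple graphs
(the Cartesian product is associative, so this is the iterated Cartesian product). -/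
def boxProdFamily {k : ℕ} {V : Fin k → Type*} (G : ∀ i, SimpleGraph (V i)) :
    SimpleGraph (∀ i, V i) where
  Adj x y := ∃ i, (G i).Adj (x i) (y i) ∧ ∀ j, j ≠ i → x j = y j
  symm := by
    constructor
    rintro x y ⟨i, hadj, heq⟩
    exact ⟨i, hadj.symm, fun j hj => (heq j hj).symm⟩
  loopless := by
    constructor
    rintro x ⟨i, hadj, -⟩
    exact (G i).irrefl hadj

section Tripod

open SimpleGraph.Walk

variable {W : Type*} {H : SimpleGraph W}

lemma rx3Aux_tripod_aux [DecidableEq W] {b : W} :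
    ∀ {c a : W} (q : H.Walk c a) (p : H.Walk a b), p.IsPath → q.IsPath →
    ∃ (m : W) (p1 : H.Walk m a) (p2 : H.Walk m b) (p3 : H.Walk m c),
      p1.edges.Nodup ∧ p2.edges.Nodup ∧ p3.edges.Nodup ∧
      (∀ e ∈ p1.edges, e ∉ p2.edges) ∧
      (∀ e ∈ p3.edges, e ∉ p.edges) ∧
      (∀ e ∈ p1.edges, e ∈ p.edges) ∧ (∀ e ∈ p2.edges, e ∈ p.edges) ∧
      (∀ e ∈ p3.edges, e ∈ q.edges) := by
  intro c a q
  induction q with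
  | nil =>
    intro p hp _
    exact ⟨_, Walk.nil, p, Walk.nil, by simp, hp.edges_nodup, by simp, by simp, by simp,
      by simp, fun e he => he, by simp⟩
  | @cons c d a h q ih =>
    intro p hp hq
    have hq' : q.IsPath := hq.of_cons
    have hcq : c ∉ q.support := ((Walk.cons_isPath_iff h q).mp hq).2
    by_cases hc : c ∈ p.support
    · have hnd : ((p.takeUntil c hc).edges ++ (p.dropUntil c hc).edges).Nodup := by
        rw [← Walk.edges_append, Walk.take_spec]
        exact hp.edges_nodup
      refine ⟨c, (p.takeUntil c hc).reverse, p.dropUntil c hc, Walk.nil, ?_, ?_, by simp,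
        ?_, by simp, ?_, ?_, by simp⟩
      · rw [Walk.edges_reverse, List.nodup_reverse]
        exact (hp.takeUntil hc).edges_nodup
      · exact (hp.dropUntil hc).edges_nodup
      · intro e he
        rw [Walk.edges_reverse, List.mem_reverse] at he
        exact List.disjoint_of_nodup_append hnd he
      · intro e he
        rw [Walk.edges_reverse, List.mem_reverse] at he
        exact p.edges_takeUntil_subset hc he
      · exact fun e he => p.edges_dropUntil_subset hc he
    · obtain ⟨m, p1, p2, p3, h1, h2, h3, h12, h3p, h1p, h2p, h3q⟩ := ih p hp hq'
      have hdc : s(d, c) ∉ p3.edges := by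
        intro hmem
        exact hcq (q.snd_mem_support_of_mem_edges (h3q _ hmem))
      refine ⟨m, p1, p2, p3.concat h.symm, h1, h2, ?_, h12, ?_, h1p, h2p, ?_⟩
      · rw [Walk.edges_concat]
        simp only [List.concat_eq_append, List.nodup_append, List.nodup_cons, List.not_mem_nil,
          not_false_iff, List.nodup_nil, and_true, List.disjoint_singleton]
        exact ⟨h3, trivial, fun a ha b hb => by rw [List.mem_singleton] at hb; subst hb; rintro rfl; exact hdc ha⟩
      · intro e he
        rw [Walk.edges_concat, List.concat_eq_append, List.mem_append] at he
        rcases he with he | he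
        · exact h3p e he
        · rw [List.mem_singleton] at he
          subst he
          intro hmem
          exact hc (p.snd_mem_support_of_mem_edges hmem)
      · intro e he
        rw [Walk.edges_concat, List.concat_eq_append, List.mem_append] at he
        rw [Walk.edges_cons]
        rcases he with he | he
        · exact List.mem_cons_of_mem _ (h3q e he)
        · rw [List.mem_singleton] at he
          subst he
          rw [Sym2.eq_swap]
          exact List.mem_cons_self

lemma rx3Aux_tripod (hH : H.Connected) (a b c : W) :
    ∃ (m : W) (p1 : H.Walk m a) (p2 : H.Walk m b) (p3 : H.Walk m c),
      p1.edges.Nodup ∧ p2.edges.Nodup ∧ p3.edges.Nodup ∧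
      (∀ e ∈ p1.edges, e ∉ p2.edges) ∧ (∀ e ∈ p3.edges, e ∉ p1.edges) ∧
      (∀ e ∈ p3.edges, e ∉ p2.edges) := by
  classical
  obtain ⟨p0⟩ := hH.preconnected a b
  obtain ⟨q0⟩ := hH.preconnected c a
  obtain ⟨m, p1, p2, p3, h1, h2, h3, h12, h3p, h1p, h2p, _⟩ :=
    rx3Aux_tripod_aux q0.bypass p0.bypass p0.bypass_isPath q0.bypass_isPath
  exact ⟨m, p1, p2, p3, h1, h2, h3, h12,
    fun e he hmem => h3p e he (h1p e hmem),
    fun e he hmem => h3p e he (h2p e hmem)⟩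

lemma rx3Aux_tripod_subgraph {V : Type*} {G : SimpleGraph V} {T : G.Subgraph}
    (hT : T.Connected) {a b c : V} (ha : a ∈ T.verts) (hb : b ∈ T.verts) (hc : c ∈ T.verts) :
    ∃ (m : V) (p1 : G.Walk m a) (p2 : G.Walk m b) (p3 : G.Walk m c),
      (∀ e ∈ p1.edges, e ∈ T.edgeSet) ∧ (∀ e ∈ p2.edges, e ∈ T.edgeSet) ∧
      (∀ e ∈ p3.edges, e ∈ T.edgeSet) ∧
      p1.edges.Nodup ∧ p2.edges.Nodup ∧ p3.edges.Nodup ∧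
      (∀ e ∈ p1.edges, e ∉ p2.edges) ∧ (∀ e ∈ p3.edges, e ∉ p1.edges) ∧
      (∀ e ∈ p3.edges, e ∉ p2.edges) := by
  obtain ⟨m, p1, p2, p3, h1, h2, h3, h12, h31, h32⟩ :=
    rx3Aux_tripod hT.coe ⟨a, ha⟩ ⟨b, hb⟩ ⟨c, hc⟩
  have hinj : Function.Injective (Sym2.map (⇑T.hom)) :=
    Sym2.map.injective Subgraph.hom_injective
  have key : ∀ {x1 x2 : ↥T.verts} (w : T.coe.Walk x1 x2), ∀ e ∈ (w.map T.hom).edges,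
      e ∈ T.edgeSet := by
    intro x1 x2 w e he
    rw [Walk.edges_map, List.mem_map] at he
    obtain ⟨e', he', rfl⟩ := he
    revert he'
    refine Sym2.ind (fun u v he' => ?_) e'
    have hadj := w.adj_of_mem_edges he'
    simpa using hadj
  refine ⟨(m : V), p1.map T.hom, p2.map T.hom, p3.map T.hom,
    key p1, key p2, key p3, ?_, ?_, ?_, ?_, ?_, ?_⟩
  · erw [Walk.edges_map]; exact h1.map hinj
  · erw [Walk.edges_map]; exact h2.map hinj
  · erw [Walk.edges_map]; exact h3.map hinj
  · intro e he1 he2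
    erw [Walk.edges_map, List.mem_map] at he1 he2
    obtain ⟨e1, he1, rfl⟩ := he1
    obtain ⟨e2, he2, heq⟩ := he2
    exact h12 e1 he1 (hinj heq ▸ he2)
  · intro e he1 he2
    erw [Walk.edges_map, List.mem_map] at he1 he2
    obtain ⟨e1, he1, rfl⟩ := he1
    obtain ⟨e2, he2, heq⟩ := he2
    exact h31 e1 he1 (hinj heq ▸ he2)
  · intro e he1 he2
    erw [Walk.edges_map, List.mem_map] at he1 he2
    obtain ⟨e1, he1, rfl⟩ := he1
    obtain ⟨e2, he2, heq⟩ := he2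
    exact h32 e1 he1 (hinj heq ▸ he2)

end Tripod

section Prod

variable {k : ℕ} {V : Fin k → Type*}

def rx3Aux_liftHom (G : ∀ i, SimpleGraph (V i)) (i : Fin k) (base : ∀ j, V j) :
    G i →g boxProdFamily G where
  toFun a := Function.update base i a
  map_rel' := by
    intro a b hab
    refine ⟨i, ?_, fun j hj => ?_⟩
    · show (G i).Adj (Function.update base i a i) (Function.update base i b i)
      rwa [Function.update_self, Function.update_self]
    · show Function.update base i a j = Function.update base i b j
      rw [Function.update_of_ne hj, Function.update_of_ne hj]

def rx3Aux_stairVert (x m : ∀ i, V i) (t : ℕ) : ∀ i, V i :=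
  fun i => if (i : ℕ) < t then x i else m i

lemma rx3Aux_stair (G : ∀ i, SimpleGraph (V i)) (x m : ∀ i, V i)
    (q : ∀ i, (G i).Walk (m i) (x i)) :
    ∀ t, t ≤ k → ∃ w : (boxProdFamily G).Walk (rx3Aux_stairVert x m t) x,
      ∀ e ∈ w.edges, ∃ i : Fin k, ∃ f ∈ (q i).edges,
        e = Sym2.map (⇑(rx3Aux_liftHom G i (rx3Aux_stairVert x m (i : ℕ)))) f := by
  suffices Hd : ∀ d t, t ≤ k → k - t ≤ d →
      ∃ w : (boxProdFamily G).Walk (rx3Aux_stairVert x m t) x,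
      ∀ e ∈ w.edges, ∃ i : Fin k, ∃ f ∈ (q i).edges,
        e = Sym2.map (⇑(rx3Aux_liftHom G i (rx3Aux_stairVert x m (i : ℕ)))) f by
    exact fun t ht => Hd k t ht (Nat.sub_le _ _)
  intro d
  induction d with
  | zero =>
    intro t ht hd
    have htk : t = k := by omega
    have hx : x = rx3Aux_stairVert x m t := by
      funext j
      have := j.isLt
      simp [rx3Aux_stairVert, show (j:ℕ) < t by omega]
    refine ⟨(Walk.nil : (boxProdFamily G).Walk x x).copy hx rfl, ?_⟩
    simp [Walk.edges_copy]
  | succ d IH =>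
    intro t ht hd
    by_cases htk : t = k
    · have hx : x = rx3Aux_stairVert x m t := by
        funext j
        have := j.isLt
        simp [rx3Aux_stairVert, show (j:ℕ) < t by omega]
      refine ⟨(Walk.nil : (boxProdFamily G).Walk x x).copy hx rfl, ?_⟩
      simp [Walk.edges_copy]
    · have htlt : t < k := lt_of_le_of_ne ht htk
      set i : Fin k := ⟨t, htlt⟩ with hi
      have h1 : Function.update (rx3Aux_stairVert x m t) i (m i) = rx3Aux_stairVert x m t := by
        funext j
        rcases eq_or_ne j i with rfl | hj
        · rw [Function.update_self]
          simp [rx3Aux_stairVert, hi]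
        · rw [Function.update_of_ne hj]
      have h2 : Function.update (rx3Aux_stairVert x m t) i (x i) =
          rx3Aux_stairVert x m (t + 1) := by
        funext j
        rcases eq_or_ne j i with rfl | hj
        · rw [Function.update_self]
          simp [rx3Aux_stairVert, hi]
        · rw [Function.update_of_ne hj]
          have hjt : (j : ℕ) ≠ t := fun hh => hj (Fin.ext (by rw [hh, hi]))
          simp only [rx3Aux_stairVert]
          by_cases hlt : (j : ℕ) < t
          · rw [if_pos hlt, if_pos (by omega)]
          · rw [if_neg hlt, if_neg (by omega)]
      obtain ⟨w', hw'⟩ := IH (t + 1) htlt (by omega)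
      refine ⟨(((q i).map (rx3Aux_liftHom G i (rx3Aux_stairVert x m t))).copy h1 h2).append w',
        ?_⟩
      intro e he
      rw [Walk.edges_append, List.mem_append] at he
      rcases he with he | he
      · erw [Walk.edges_copy, Walk.edges_map, List.mem_map] at he
        obtain ⟨f, hf, rfl⟩ := he
        exact ⟨i, f, hf, rfl⟩
      · exact hw' e he

noncomputable def rx3Aux_off (n : Fin k → ℕ) (i : Fin k) : ℕ :=
  ∑ j ∈ Finset.univ.filter (fun j => j < i), n j

lemma rx3Aux_off_mono (n : Fin k → ℕ) {i i' : Fin k} (h : i < i') :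
    rx3Aux_off n i + n i ≤ rx3Aux_off n i' := by
  classical
  have hnm : i ∉ Finset.univ.filter (fun j => j < i) := by simp
  have hsub : insert i (Finset.univ.filter (fun j => j < i)) ⊆
      Finset.univ.filter (fun j => j < i') := by
    intro j hj
    simp only [Finset.mem_insert, Finset.mem_filter, Finset.mem_univ, true_and] at hj ⊢
    exact hj.elim (fun e => e ▸ h) (fun hlt => hlt.trans h)
  have := Finset.sum_le_sum_of_subset (f := n) hsub
  rw [Finset.sum_insert hnm] at this
  unfold rx3Aux_off
  omega

lemma rx3Aux_off_total (n : Fin k → ℕ) (i : Fin k) :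
    rx3Aux_off n i + n i ≤ ∑ j, n j := by
  classical
  have hnm : i ∉ Finset.univ.filter (fun j => j < i) := by simp
  have hsub : insert i (Finset.univ.filter (fun j => j < i)) ⊆ Finset.univ := by
    intro j _; exact Finset.mem_univ j
  have := Finset.sum_le_sum_of_subset (f := n) hsub
  rw [Finset.sum_insert hnm] at this
  unfold rx3Aux_off
  omega

lemma rx3Aux_off_inj (n : Fin k → ℕ) {i i' : Fin k} {a a' : ℕ}
    (ha : a < n i) (ha' : a' < n i') (h : rx3Aux_off n i + a = rx3Aux_off n i' + a') :
    i = i' := by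
  rcases lt_trichotomy i i' with hlt | heq | hgt
  · have := rx3Aux_off_mono n hlt
    omega
  · exact heq
  · have := rx3Aux_off_mono n hgt
    omega

noncomputable def rx3Aux_color (off : Fin k → ℕ) (c : ∀ i, Sym2 (V i) → ℕ) :
    Sym2 (∀ i, V i) → ℕ := by
  classical
  exact Sym2.lift ⟨fun u v => ∑ i, if u i ≠ v i then off i + c i s(u i, v i) else 0, by
    intro u v
    refine Finset.sum_congr rfl fun i _ => ?_
    rw [Sym2.eq_swap]
    exact if_congr ne_comm rfl rfl⟩

lemma rx3Aux_color_eval (off : Fin k → ℕ) (c : ∀ i, Sym2 (V i) → ℕ)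
    {u v : ∀ i, V i} {i : Fin k} (hne : u i ≠ v i) (heq : ∀ j, j ≠ i → u j = v j) :
    rx3Aux_color off c s(u, v) = off i + c i s(u i, v i) := by
  classical
  unfold rx3Aux_color
  simp only [Sym2.lift_mk]
  rw [Finset.sum_eq_single i]
  · rw [if_pos hne]
  · intro j _ hj
    rw [if_neg (fun hh => hh (heq j hj))]
  · intro hi
    exact absurd (Finset.mem_univ i) hi

end Prod

section MoreAux

lemma rx3Aux_nonempty {X : Type*} [Fintype X] {G : SimpleGraph X} (h : G.Connected) :
    {n | ∃ c : Sym2 X → ℕ, (∀ e ∈ G.edgeSet, c e < n) ∧ IsRainbowColoring3 G c}.Nonempty := by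
  classical
  refine ⟨Fintype.card (Sym2 X), fun e => ((Fintype.equivFin (Sym2 X)) e : ℕ),
    fun e _ => (Fintype.equivFin (Sym2 X) e).isLt, ?_⟩
  intro S _
  refine ⟨⊤, ?_, ?_, ?_⟩
  · exact Subgraph.connected_iff'.mpr (Subgraph.topIso.connected_iff.mpr h)
  · simp [Subgraph.verts_top]
  · intro e1 _ e2 _ hcc
    exact (Fintype.equivFin (Sym2 X)).injective (Fin.val_injective hcc)

lemma rx3Aux_exists_three {α : Type*} [Nonempty α] {S : Set α} (hfin : S.Finite)
    (h : S.ncard ≤ 3) : ∃ x y z : α, S ⊆ {x, y, z} := by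
  classical
  inhabit α
  obtain ⟨l, hlen, hmem⟩ : ∃ l : List α, l.length ≤ 3 ∧ ∀ a ∈ S, a ∈ l := by
    refine ⟨hfin.toFinset.toList, ?_, ?_⟩
    · rw [Finset.length_toList]
      rwa [Set.ncard_eq_toFinset_card S hfin] at h
    · intro a ha
      rw [Finset.mem_toList, Set.Finite.mem_toFinset]
      exact ha
  rcases l with _ | ⟨x, _ | ⟨y, _ | ⟨z, _ | ⟨w, l'⟩⟩⟩⟩
  · exact ⟨default, default, default,
      fun a ha => absurd (hmem a ha) List.not_mem_nil⟩
  · refine ⟨x, x, x, fun a ha => ?_⟩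
    have := hmem a ha
    simp only [List.mem_singleton] at this
    simp [this]
  · refine ⟨x, y, y, fun a ha => ?_⟩
    have := hmem a ha
    simp only [List.mem_cons, List.mem_singleton] at this
    rcases this with rfl | rfl | h'
    · simp
    · simp
    · exact absurd h' List.not_mem_nil
  · refine ⟨x, y, z, fun a ha => ?_⟩
    have := hmem a ha
    simp only [List.mem_cons, List.mem_singleton] at this
    rcases this with rfl | rfl | rfl | h'
    · simp
    · simp
    · simp
    · exact absurd h' List.not_mem_nil
  · simp at hlen; omega

end MoreAux

/-- For `k ≥ 2` connected graphs `G₁, …, G_k`, each with at least 2 vertices,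
`rx₃(G₁ □ ⋯ □ G_k) ≤ ∑ rx₃(Gᵢ)`. -/
theorem rx3_boxProdFamily_le {k : ℕ} (hk : 2 ≤ k) {V : Fin k → Type*}
    [∀ i, Fintype (V i)] (G : ∀ i, SimpleGraph (V i))
    (hconn : ∀ i, (G i).Connected) (hcard : ∀ i, 2 ≤ Fintype.card (V i)) :
    rx3 (boxProdFamily G) ≤ ∑ i, rx3 (G i) := by
  classical
  have hneV : ∀ i, Nonempty (V i) := fun i =>
    Fintype.card_pos_iff.mp (lt_of_lt_of_le (by norm_num) (hcard i))
  have hnePi : Nonempty (∀ i, V i) := ⟨fun i => (hneV i).some⟩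
  have hmem : ∀ i, rx3 (G i) ∈ {n | ∃ c : Sym2 (V i) → ℕ,
      (∀ e ∈ (G i).edgeSet, c e < n) ∧ IsRainbowColoring3 (G i) c} :=
    fun i => Nat.sInf_mem (rx3Aux_nonempty (hconn i))
  choose c hc hrb using hmem
  set n : Fin k → ℕ := fun i => rx3 (G i) with hn
  have total : ∀ i, rx3Aux_off n i + n i ≤ ∑ j, n j := rx3Aux_off_total n
  show sInf _ ≤ ∑ i, n i
  refine Nat.sInf_le ⟨rx3Aux_color (rx3Aux_off n) c, ?_, ?_⟩
  · -- the coloring uses fewer than ∑ n i colors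
    intro e he
    revert he
    refine Sym2.ind (fun u v he => ?_) e
    rw [SimpleGraph.mem_edgeSet] at he
    obtain ⟨i, hadj, heq⟩ := he
    rw [rx3Aux_color_eval (rx3Aux_off n) c hadj.ne heq]
    have hlt : c i s(u i, v i) < n i := hc i _ ((G i).mem_edgeSet.mpr hadj)
    have := total i
    omega
  · -- it is a 3-rainbow coloring
    intro S hS
    obtain ⟨x, y, z, hSsub⟩ := rx3Aux_exists_three (Set.toFinite S) hS
    have hT : ∀ i, ∃ T : (G i).Subgraph, T.Connected ∧
        ({x i, y i, z i} : Set (V i)) ⊆ T.verts ∧ Set.InjOn (c i) T.edgeSet := by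
      intro i
      apply hrb i
      have h1 := Set.ncard_insert_le (x i) ({y i, z i} : Set (V i))
      have h2 := Set.ncard_insert_le (y i) ({z i} : Set (V i))
      have h3 := Set.ncard_singleton (z i)
      omega
    choose T hTc hTv hTi using hT
    have htp : ∀ i, ∃ (m : V i) (p1 : (G i).Walk m (x i)) (p2 : (G i).Walk m (y i))
        (p3 : (G i).Walk m (z i)),
        (∀ e ∈ p1.edges, e ∈ (T i).edgeSet) ∧ (∀ e ∈ p2.edges, e ∈ (T i).edgeSet) ∧
        (∀ e ∈ p3.edges, e ∈ (T i).edgeSet) ∧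
        p1.edges.Nodup ∧ p2.edges.Nodup ∧ p3.edges.Nodup ∧
        (∀ e ∈ p1.edges, e ∉ p2.edges) ∧ (∀ e ∈ p3.edges, e ∉ p1.edges) ∧
        (∀ e ∈ p3.edges, e ∉ p2.edges) := by
      intro i
      exact rx3Aux_tripod_subgraph (hTc i)
        (hTv i (by simp)) (hTv i (by simp)) (hTv i (by simp))
    choose m p1 p2 p3 hp1T hp2T hp3T _ _ _ hd12 hd31 hd32 using htp
    obtain ⟨w1, hw1⟩ := rx3Aux_stair G x m p1 0 (Nat.zero_le k)
    obtain ⟨w2, hw2⟩ := rx3Aux_stair G y m p2 0 (Nat.zero_le k)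
    obtain ⟨w3, hw3⟩ := rx3Aux_stair G z m p3 0 (Nat.zero_le k)
    have h0x : rx3Aux_stairVert x m 0 = m := by funext j; simp [rx3Aux_stairVert]
    have h0y : rx3Aux_stairVert y m 0 = m := by funext j; simp [rx3Aux_stairVert]
    have h0z : rx3Aux_stairVert z m 0 = m := by funext j; simp [rx3Aux_stairVert]
    refine ⟨(w1.copy h0x rfl).toSubgraph ⊔ (w2.copy h0y rfl).toSubgraph ⊔
      (w3.copy h0z rfl).toSubgraph, ?_, ?_, ?_⟩
    · refine Subgraph.connected_sup (Subgraph.connected_sup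
        (w1.copy h0x rfl).toSubgraph_connected.preconnected (w2.copy h0y rfl).toSubgraph_connected.preconnected
        ⟨m, ?_, ?_⟩).preconnected (w3.copy h0z rfl).toSubgraph_connected.preconnected ⟨m, ?_, ?_⟩
      · exact (w1.copy h0x rfl).start_mem_verts_toSubgraph
      · exact (w2.copy h0y rfl).start_mem_verts_toSubgraph
      · exact Or.inl (w1.copy h0x rfl).start_mem_verts_toSubgraph
      · exact (w3.copy h0z rfl).start_mem_verts_toSubgraph
    · intro s hs
      rcases hSsub hs with rfl | rfl | rfl
      · exact Or.inl (Or.inl (w1.copy h0x rfl).end_mem_verts_toSubgraph)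
      · exact Or.inl (Or.inr (w2.copy h0y rfl).end_mem_verts_toSubgraph)
      · exact Or.inr (w3.copy h0z rfl).end_mem_verts_toSubgraph
    · have decomp : ∀ e ∈ ((w1.copy h0x rfl).toSubgraph ⊔ (w2.copy h0y rfl).toSubgraph ⊔
          (w3.copy h0z rfl).toSubgraph).edgeSet,
          ∃ (i : Fin k) (f : Sym2 (V i)), f ∈ (T i).edgeSet ∧ f ∈ (G i).edgeSet ∧
            ((f ∈ (p1 i).edges ∧
              e = Sym2.map (⇑(rx3Aux_liftHom G i (rx3Aux_stairVert x m (i : ℕ)))) f) ∨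
             (f ∈ (p2 i).edges ∧
              e = Sym2.map (⇑(rx3Aux_liftHom G i (rx3Aux_stairVert y m (i : ℕ)))) f) ∨
             (f ∈ (p3 i).edges ∧
              e = Sym2.map (⇑(rx3Aux_liftHom G i (rx3Aux_stairVert z m (i : ℕ)))) f)) := by
        intro e he
        simp only [Subgraph.edgeSet_sup, Set.mem_union, Walk.edgeSet_toSubgraph,
          Set.mem_setOf_eq, Walk.edges_copy] at he
        rcases he with (he | he) | he
        · obtain ⟨i, f, hf, hfe⟩ := hw1 e he
          exact ⟨i, f, hp1T i f hf, (T i).edgeSet_subset (hp1T i f hf), Or.inl ⟨hf, hfe⟩⟩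
        · obtain ⟨i, f, hf, hfe⟩ := hw2 e he
          exact ⟨i, f, hp2T i f hf, (T i).edgeSet_subset (hp2T i f hf),
            Or.inr (Or.inl ⟨hf, hfe⟩)⟩
        · obtain ⟨i, f, hf, hfe⟩ := hw3 e he
          exact ⟨i, f, hp3T i f hf, (T i).edgeSet_subset (hp3T i f hf),
            Or.inr (Or.inr ⟨hf, hfe⟩)⟩
      have hval : ∀ {i : Fin k} {f : Sym2 (V i)} (b : ∀ j, V j), f ∈ (G i).edgeSet →
          rx3Aux_color (rx3Aux_off n) c (Sym2.map (⇑(rx3Aux_liftHom G i b)) f) =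
            rx3Aux_off n i + c i f := by
        intro i f b hf
        revert hf
        refine Sym2.ind (fun a a' hf => ?_) f
        rw [SimpleGraph.mem_edgeSet] at hf
        have hmap : Sym2.map (⇑(rx3Aux_liftHom G i b)) s(a, a') =
            s(Function.update b i a, Function.update b i a') := Sym2.map_pair_eq _ _ _
        rw [hmap, rx3Aux_color_eval (rx3Aux_off n) c
          (i := i) (by rw [Function.update_self, Function.update_self]; exact hf.ne)
          (fun j hj => by rw [Function.update_of_ne hj, Function.update_of_ne hj])]
        rw [Function.update_self, Function.update_self]
      intro e1 he1 e2 he2 hceq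
      obtain ⟨i1, f1, hT1, hG1, hcase1⟩ := decomp e1 he1
      obtain ⟨i2, f2, hT2, hG2, hcase2⟩ := decomp e2 he2
      have hv1 : rx3Aux_color (rx3Aux_off n) c e1 = rx3Aux_off n i1 + c i1 f1 := by
        rcases hcase1 with ⟨_, rfl⟩ | ⟨_, rfl⟩ | ⟨_, rfl⟩ <;> exact hval _ hG1
      have hv2 : rx3Aux_color (rx3Aux_off n) c e2 = rx3Aux_off n i2 + c i2 f2 := by
        rcases hcase2 with ⟨_, rfl⟩ | ⟨_, rfl⟩ | ⟨_, rfl⟩ <;> exact hval _ hG2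
      rw [hv1, hv2] at hceq
      have hlt1 : c i1 f1 < n i1 := hc i1 f1 hG1
      have hlt2 : c i2 f2 < n i2 := hc i2 f2 hG2
      have hii : i1 = i2 := rx3Aux_off_inj n hlt1 hlt2 hceq
      subst hii
      have hff : f1 = f2 := hTi i1 hT1 hT2 (by omega)
      subst hff
      rcases hcase1 with ⟨hfa, he1'⟩ | ⟨hfa, he1'⟩ | ⟨hfa, he1'⟩ <;>
        rcases hcase2 with ⟨hfb, he2'⟩ | ⟨hfb, he2'⟩ | ⟨hfb, he2'⟩
      · rw [he1', he2']
      · exact absurd hfb (hd12 i1 f1 hfa)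
      · exact absurd hfa (hd31 i1 f1 hfb)
      · exact absurd hfa (hd12 i1 f1 hfb)
      · rw [he1', he2']
      · exact absurd hfa (hd32 i1 f1 hfb)
      · exact absurd hfb (hd31 i1 f1 hfa)
      · exact absurd hfb (hd32 i1 f1 hfa)
      · rw [he1', he2']
end
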